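/- arXiv:1911.12060 — 9 statements merged into one kernel-verified Lean document; each statement's English description precedes it below -/
import Mathlib

section
/- For every δ ∈ (0,1) and every C > 0 there exists G > 0 such that for all ε > G the following holds: for every real number a satisfying erfc(a) − e^ε · erfc(√(a² + ε)) = 2δ, one has √2 · C < a + √(a² + ε). (Since the minimal standard deviation of Gaussian noise achieving (ε,δ)-differential privacy for a query of ℓ₂-sensitivity Δ is (a + √(a² + ε))·Δ/(ε√2), this says that any Gaussian mechanism with noise amount C·Δ/ε — in particular the classical mechanisms with C = √(2 ln(2/δ)) or C = √(2 ln(1.25/δ)) — fails to achieve (ε,δ)-differential privacy for all sufficiently large ε.) -/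
/-!
If `a ≤ -K`, then `erfc a ≥ erfc (-K) = 2 - erfc K`, while the Gaussian tail bound
`erfc x ≤ exp (-x ^ 2)` (for `x ≥ 1`) gives
`exp ε * erfc √(a ^ 2 + ε) ≤ exp (-a ^ 2) ≤ exp (-K ^ 2)`.
Choosing `K` with `exp (-K ^ 2) < 1 - δ`, the left side of the equation then exceeds `2 * δ`,
so every solution has `a > -K`, and `a + √(a ^ 2 + ε) > √ε - K` is eventually above `√2 * C`.
-/

open Real

/-- The Gauss error function `erf x = (2/√π) ∫₀ˣ e^{−t²} dt`. -/
noncomputable def erf (x : ℝ) : ℝ := 2 / Real.sqrt Real.pi * ∫ t in (0:ℝ)..x, Real.exp (-t ^ 2)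

/-- The complementary error function `erfc x = 1 - erf x`. -/
noncomputable def erfc (x : ℝ) : ℝ := 1 - erf x

open MeasureTheory Set Filter

lemma integrable_exp_neg_sq : Integrable fun t : ℝ => exp (-t ^ 2) := by
  simpa using integrable_exp_neg_mul_sq one_pos

lemma erf_neg (x : ℝ) : erf (-x) = -erf x := by
  have h := intervalIntegral.integral_comp_neg (a := x) (b := 0) fun t => exp (-t ^ 2)
  simp only [neg_sq, neg_zero] at h
  rw [erf, ← h, intervalIntegral.integral_symm, erf]
  ring

lemma erfc_neg (x : ℝ) : erfc (-x) = 2 - erfc x := by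
  rw [erfc, erfc, erf_neg]
  ring

lemma erfc_eq_integral_Ioi (x : ℝ) :
    erfc x = 2 / √π * ∫ t in Ioi x, exp (-t ^ 2) := by
  have hsplit := intervalIntegral.integral_interval_add_Ioi (a := 0) (b := x)
    integrable_exp_neg_sq.integrableOn integrable_exp_neg_sq.integrableOn
  have hhalf : ∫ t in Ioi (0 : ℝ), exp (-t ^ 2) = √π / 2 := by
    simpa using integral_gaussian_Ioi 1
  have hπ : √π ≠ 0 := (sqrt_pos.2 pi_pos).ne'
  rw [erfc, erf, eq_sub_of_add_eq' hsplit, hhalf]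
  field_simp

lemma erfc_antitone : Antitone erfc := by
  intro x y hxy
  rw [erfc_eq_integral_Ioi, erfc_eq_integral_Ioi]
  gcongr ?_ * ?_
  exact setIntegral_mono_set integrable_exp_neg_sq.integrableOn
    (Eventually.of_forall fun t => (exp_pos _).le) (Ioi_subset_Ioi hxy).eventuallyLE

lemma tendsto_exp_neg_sq_atTop : Tendsto (fun t : ℝ => exp (-t ^ 2)) atTop (nhds 0) :=
  tendsto_exp_atBot.comp (tendsto_neg_atTop_atBot.comp (tendsto_pow_atTop two_ne_zero))

lemma integral_Ioi_mul_exp_neg_sq (x : ℝ) :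
    ∫ t in Ioi x, t * exp (-t ^ 2) = exp (-x ^ 2) / 2 := by
  have hderiv (t : ℝ) : HasDerivAt (fun t => -exp (-t ^ 2) / 2) (t * exp (-t ^ 2)) t := by
    refine ((hasDerivAt_pow 2 t).fun_neg.exp.fun_neg.div_const 2).congr_deriv ?_
    ring
  have hlim : Tendsto (fun t : ℝ => -exp (-t ^ 2) / 2) atTop (nhds 0) := by
    simpa using tendsto_exp_neg_sq_atTop.neg.div_const 2
  rw [integral_Ioi_of_hasDerivAt_of_tendsto' (fun t _ => hderiv t)
    (by simpa using (integrable_mul_exp_neg_mul_sq one_pos).integrableOn) hlim]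
  ring

lemma erfc_le_exp_neg_sq_div {x : ℝ} (hx : 0 < x) : erfc x ≤ exp (-x ^ 2) / (√π * x) := by
  have hintegrable : IntegrableOn (fun t : ℝ => t * exp (-t ^ 2)) (Ioi x) := by
    simpa using (integrable_mul_exp_neg_mul_sq one_pos).integrableOn
  have htail : ∫ t in Ioi x, exp (-t ^ 2) ≤ ∫ t in Ioi x, t * exp (-t ^ 2) / x := by
    refine setIntegral_mono_on integrable_exp_neg_sq.integrableOn (hintegrable.div_const x)
      measurableSet_Ioi fun t ht => ?_
    rw [le_div_iff₀ hx, mul_comm]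
    exact mul_le_mul_of_nonneg_right (le_of_lt ht) (exp_pos _).le
  have hscaled : ∫ t in Ioi x, t * exp (-t ^ 2) / x = exp (-x ^ 2) / (2 * x) := by
    rw [integral_div, integral_Ioi_mul_exp_neg_sq]
    ring
  have hπ : 0 < √π := sqrt_pos.2 pi_pos
  calc erfc x ≤ 2 / √π * (exp (-x ^ 2) / (2 * x)) := by
        rw [erfc_eq_integral_Ioi, ← hscaled]; gcongr
    _ = exp (-x ^ 2) / (√π * x) := by field_simp

lemma erfc_le_exp_neg_sq {x : ℝ} (hx : 1 ≤ x) : erfc x ≤ exp (-x ^ 2) := by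
  have hπx : 1 ≤ √π * x :=
    one_le_mul_of_one_le_of_one_le (one_le_sqrt.2 (by linarith [pi_gt_three])) hx
  exact (erfc_le_exp_neg_sq_div (by linarith)).trans (div_le_self (exp_pos _).le hπx)

lemma exp_mul_erfc_sqrt_sq_add_le {a ε : ℝ} (h : 1 ≤ a ^ 2 + ε) :
    exp ε * erfc √(a ^ 2 + ε) ≤ exp (-a ^ 2) := by
  have hbound := erfc_le_exp_neg_sq (one_le_sqrt.2 h)
  rw [sq_sqrt (by linarith)] at hbound
  calc exp ε * erfc √(a ^ 2 + ε) ≤ exp ε * exp (-(a ^ 2 + ε)) := by gcongr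
    _ = exp (-a ^ 2) := by rw [← exp_add]; ring_nf

lemma neg_lt_of_erfc_sub_exp_mul_erfc_eq {δ K ε a : ℝ} (hK : 1 ≤ K)
    (hKδ : exp (-K ^ 2) < 1 - δ) (hε : 1 ≤ ε)
    (h : erfc a - exp ε * erfc √(a ^ 2 + ε) = 2 * δ) : -K < a := by
  by_contra! haK
  have hfirst : 2 - exp (-K ^ 2) ≤ erfc a := by
    have := erfc_antitone haK
    rw [erfc_neg] at this
    linarith [erfc_le_exp_neg_sq hK]
  have hsecond : exp ε * erfc √(a ^ 2 + ε) ≤ exp (-K ^ 2) := by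
    refine (exp_mul_erfc_sqrt_sq_add_le (by nlinarith)).trans (exp_le_exp.2 ?_)
    nlinarith
  linarith

lemma exists_one_le_exp_neg_sq_lt {c : ℝ} (hc : 0 < c) : ∃ K : ℝ, 1 ≤ K ∧ exp (-K ^ 2) < c := by
  exact ((eventually_ge_atTop 1).and
    (tendsto_exp_neg_sq_atTop.eventually (gt_mem_nhds hc))).exists

theorem classical_gaussian_mechanisms_fail_for_large_eps_general
    (δ : ℝ) (hδ : 0 < δ ∧ δ < 1) (C : ℝ) :
    ∃ G : ℝ, 0 < G ∧ ∀ ε : ℝ, G < ε →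
      ∀ a : ℝ, erfc a - Real.exp ε * erfc (Real.sqrt (a ^ 2 + ε)) = 2 * δ →
        Real.sqrt 2 * C < a + Real.sqrt (a ^ 2 + ε) := by
  obtain ⟨K, hK, hKδ⟩ := exists_one_le_exp_neg_sq_lt (sub_pos.2 hδ.2)
  refine ⟨1 + (√2 * C + K) ^ 2, by positivity, fun ε hε a ha => ?_⟩
  have haK : -K < a := neg_lt_of_erfc_sub_exp_mul_erfc_eq hK hKδ (by nlinarith) ha
  have hsqrt : √2 * C + K < √(a ^ 2 + ε) := lt_sqrt_of_sq_lt (by nlinarith)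
  linarith

/-- For every `δ ∈ (0,1)` and every `C > 0` there exists `G > 0` such that for all `ε > G`:
for every real `a` with `erfc a − e^ε · erfc (√(a² + ε)) = 2δ`, one has
`√2 · C < a + √(a² + ε)`. -/
theorem classical_gaussian_mechanisms_fail_for_large_eps
    (δ : ℝ) (hδ : 0 < δ ∧ δ < 1) (C : ℝ) (hC : 0 < C) :
    ∃ G : ℝ, 0 < G ∧ ∀ ε : ℝ, G < ε →
      ∀ a : ℝ, erfc a - Real.exp ε * erfc (Real.sqrt (a ^ 2 + ε)) = 2 * δ →
        Real.sqrt 2 * C < a + Real.sqrt (a ^ 2 + ε) :=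
  classical_gaussian_mechanisms_fail_for_large_eps_general δ hδ C
end

section
/- For every C > 0, defining h(ε) = C/√2 − ε/(2√2·C), the function ε ↦ erfc(h(ε)) − e^ε · erfc(√(h(ε)² + ε)) tends to 2 as ε → ∞. -/
open Real

open MeasureTheory Filter Set

lemma gauss_integrable : Integrable (fun t : ℝ => Real.exp (-t ^ 2)) := by
  simpa using integrable_exp_neg_mul_sq (by norm_num : (0:ℝ) < 1)

lemma gauss_integral_Ioi_zero : ∫ t in Ioi (0:ℝ), Real.exp (-t ^ 2) = Real.sqrt π / 2 := by
  simpa using integral_gaussian_Ioi 1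

lemma erfc_tendsto_atBot : Tendsto erfc atBot (nhds 2) := by
  have h1 : Tendsto (fun x : ℝ => ∫ t in x..(0:ℝ), Real.exp (-t ^ 2)) atBot
      (nhds (∫ t in Iic (0:ℝ), Real.exp (-t ^ 2))) :=
    intervalIntegral_tendsto_integral_Iic 0 gauss_integrable.integrableOn tendsto_id
  have h2 : ∫ t in Iic (0:ℝ), Real.exp (-t ^ 2) = Real.sqrt π / 2 := by
    have := integral_comp_neg_Iic (c := (0:ℝ)) (fun t => Real.exp (-t ^ 2))
    simp only [neg_zero, neg_sq] at this
    rw [this, gauss_integral_Ioi_zero]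
  rw [h2] at h1
  have hπ : Real.sqrt π ≠ 0 := ne_of_gt (Real.sqrt_pos.mpr Real.pi_pos)
  have key := ((h1.const_mul (2 / Real.sqrt π)).neg.const_sub 1)
  have hval : 1 - -(2 / Real.sqrt π * (Real.sqrt π / 2)) = 2 := by
    rw [div_mul_div_comm, mul_comm (Real.sqrt π) 2, div_self (by positivity)]
    norm_num
  rw [hval] at key
  refine key.congr fun x => ?_
  unfold erfc erf
  rw [intervalIntegral.integral_symm]
  ring

lemma erfc_eq_Ioi {y : ℝ} (hy : 0 ≤ y) :
    erfc y = 2 / Real.sqrt π * ∫ t in Ioi y, Real.exp (-t ^ 2) := by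
  have hsplit : (∫ t in Ioc (0:ℝ) y, Real.exp (-t ^ 2)) + ∫ t in Ioi y, Real.exp (-t ^ 2)
      = Real.sqrt π / 2 := by
    rw [← setIntegral_union (Ioc_disjoint_Ioi le_rfl) measurableSet_Ioi
      gauss_integrable.integrableOn gauss_integrable.integrableOn,
      Ioc_union_Ioi_eq_Ioi hy, gauss_integral_Ioi_zero]
  have hπ : Real.sqrt π ≠ 0 := ne_of_gt (Real.sqrt_pos.mpr Real.pi_pos)
  unfold erfc erf
  rw [intervalIntegral.integral_of_le hy]
  have : (∫ t in Ioc (0:ℝ) y, Real.exp (-t ^ 2))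
      = Real.sqrt π / 2 - ∫ t in Ioi y, Real.exp (-t ^ 2) := by linarith
  rw [this]
  field_simp
  ring

lemma erfc_nonneg {y : ℝ} (hy : 0 ≤ y) : 0 ≤ erfc y := by
  rw [erfc_eq_Ioi hy]
  have h1 : 0 ≤ ∫ t in Ioi y, Real.exp (-t ^ 2) :=
    setIntegral_nonneg measurableSet_Ioi fun t _ => (Real.exp_pos _).le
  positivity

lemma erfc_le {y : ℝ} (hy : 0 ≤ y) : erfc y ≤ 2 * Real.exp (-y ^ 2) := by
  rw [erfc_eq_Ioi hy]
  have hπ : 0 < Real.sqrt π := Real.sqrt_pos.mpr Real.pi_pos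
  have hint2 : Integrable (fun t : ℝ => Real.exp (-y ^ 2) * Real.exp (-(t - y) ^ 2)) :=
    (gauss_integrable.comp_sub_right y).const_mul _
  have hmono : (∫ t in Ioi y, Real.exp (-t ^ 2))
      ≤ ∫ t in Ioi y, Real.exp (-y ^ 2) * Real.exp (-(t - y) ^ 2) := by
    refine setIntegral_mono_on gauss_integrable.integrableOn hint2.integrableOn
      measurableSet_Ioi fun t ht => ?_
    rw [← Real.exp_add]
    apply Real.exp_le_exp.mpr
    have ht' : y ≤ t := le_of_lt ht
    nlinarith
  have hbound : (∫ t in Ioi y, Real.exp (-y ^ 2) * Real.exp (-(t - y) ^ 2))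
      ≤ Real.exp (-y ^ 2) * Real.sqrt π := by
    have h1 : (∫ t in Ioi y, Real.exp (-y ^ 2) * Real.exp (-(t - y) ^ 2))
        ≤ ∫ t : ℝ, Real.exp (-y ^ 2) * Real.exp (-(t - y) ^ 2) :=
      setIntegral_le_integral hint2 (Eventually.of_forall fun t => by positivity)
    have h2 : (∫ t : ℝ, Real.exp (-y ^ 2) * Real.exp (-(t - y) ^ 2))
        = Real.exp (-y ^ 2) * Real.sqrt π := by
      rw [integral_const_mul]
      congr 1
      rw [integral_sub_right_eq_self (fun t : ℝ => Real.exp (-t ^ 2)) y]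
      simpa using integral_gaussian 1
    linarith
  calc 2 / Real.sqrt π * ∫ t in Ioi y, Real.exp (-t ^ 2)
      ≤ 2 / Real.sqrt π * (Real.exp (-y ^ 2) * Real.sqrt π) := by
        apply mul_le_mul_of_nonneg_left (le_trans hmono hbound) (by positivity)
    _ = 2 * Real.exp (-y ^ 2) := by field_simp

/-- For every `C > 0`, with `h ε = C/√2 − ε/(2√2·C)`, the function
`ε ↦ erfc (h ε) − e^ε · erfc (√((h ε)² + ε))` tends to `2` as `ε → ∞`. -/
theorem tendsto_erfc_sub_exp_mul_erfc_atTop (C : ℝ) (hC : 0 < C) :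
    Filter.Tendsto
      (fun ε : ℝ =>
        erfc (C / Real.sqrt 2 - ε / (2 * Real.sqrt 2 * C)) -
          Real.exp ε *
            erfc (Real.sqrt ((C / Real.sqrt 2 - ε / (2 * Real.sqrt 2 * C)) ^ 2 + ε)))
      Filter.atTop (nhds 2) := by
  set h : ℝ → ℝ := fun ε => C / Real.sqrt 2 - ε / (2 * Real.sqrt 2 * C) with hh
  have hden : 0 < 2 * Real.sqrt 2 * C := by positivity
  have hbot : Tendsto h atTop atBot := by
    have h1 : Tendsto (fun ε : ℝ => ε / (2 * Real.sqrt 2 * C)) atTop atTop :=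
      tendsto_id.atTop_div_const hden
    have h2 := tendsto_atBot_add_const_left atTop (C / Real.sqrt 2)
      (tendsto_neg_atTop_atBot.comp h1)
    exact h2.congr fun x => (sub_eq_add_neg _ _).symm
  have term1 : Tendsto (fun ε => erfc (h ε)) atTop (nhds 2) :=
    erfc_tendsto_atBot.comp hbot
  have hsq : Tendsto (fun ε => (h ε) ^ 2) atTop atTop := by
    have : Tendsto (fun ε => (-(h ε)) ^ 2) atTop atTop :=
      (tendsto_pow_atTop (two_ne_zero)).comp (tendsto_neg_atBot_atTop.comp hbot)
    exact this.congr fun x => neg_sq (h x)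
  have hexp : Tendsto (fun ε => 2 * Real.exp (-(h ε) ^ 2)) atTop (nhds 0) := by
    have h0 : Tendsto (fun ε => Real.exp (-(h ε) ^ 2)) atTop (nhds 0) :=
      Real.tendsto_exp_atBot.comp (tendsto_neg_atTop_atBot.comp hsq)
    simpa using h0.const_mul 2
  have hev : ∀ᶠ ε : ℝ in atTop, (h ε) ^ 2 + ε ≥ 0 := by
    filter_upwards [eventually_ge_atTop (0:ℝ)] with ε hε
    positivity
  have term2 : Tendsto (fun ε => Real.exp ε * erfc (Real.sqrt ((h ε) ^ 2 + ε))) atTop (nhds 0) := by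
    apply squeeze_zero' ?_ ?_ hexp
    · filter_upwards with ε
      exact mul_nonneg (Real.exp_pos _).le (erfc_nonneg (Real.sqrt_nonneg _))
    · filter_upwards [hev] with ε hε
      have h1 : erfc (Real.sqrt ((h ε) ^ 2 + ε)) ≤ 2 * Real.exp (-((h ε) ^ 2 + ε)) := by
        have := erfc_le (Real.sqrt_nonneg ((h ε) ^ 2 + ε))
        rwa [Real.sq_sqrt hε] at this
      calc Real.exp ε * erfc (Real.sqrt ((h ε) ^ 2 + ε))
          ≤ Real.exp ε * (2 * Real.exp (-((h ε) ^ 2 + ε))) :=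
            mul_le_mul_of_nonneg_left h1 (Real.exp_pos _).le
        _ = 2 * (Real.exp (-((h ε) ^ 2 + ε)) * Real.exp ε) := by ring
        _ = 2 * Real.exp (-(h ε) ^ 2) := by
            rw [← Real.exp_add]; congr 1; ring
  have := term1.sub term2
  simpa using this
end

section
/- For every ε > 0, the function r(u) = erfc(u) − e^ε · erfc(√(u² + ε)) is strictly decreasing on the whole real line. -/
/-!
Differentiating, `r'(u) = (2/√π) e^{-u²} (u / √(u² + ε) - 1)`: the factor `e^ε` is exactly
what turns the Gaussian `e^{-(u² + ε)}` at the inner point back into `e^{-u²}`.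
Since `u < √(u² + ε)`, the derivative is negative everywhere.
-/

open Real

lemma hasDerivAt_erf (x : ℝ) : HasDerivAt erf (2 / √π * exp (-x ^ 2)) x :=
  ((continuous_exp.comp (continuous_pow 2).neg).integral_hasStrictDerivAt 0 x).hasDerivAt
    |>.const_mul _

lemma hasDerivAt_erfc (x : ℝ) : HasDerivAt erfc (-(2 / √π * exp (-x ^ 2))) x :=
  (hasDerivAt_erf x).const_sub 1

lemma hasDerivAt_sqrt_sq_add {ε : ℝ} (hε : 0 < ε) (x : ℝ) :
    HasDerivAt (fun u : ℝ => √(u ^ 2 + ε)) (x / √(x ^ 2 + ε)) x := by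
  have hpos : 0 < x ^ 2 + ε := by positivity
  convert ((hasDerivAt_pow 2 x).add_const ε).sqrt hpos.ne' using 1
  field_simp
  ring

lemma hasDerivAt_erfc_sqrt_sq_add {ε : ℝ} (hε : 0 < ε) (x : ℝ) :
    HasDerivAt (fun u : ℝ => erfc √(u ^ 2 + ε))
      (-(2 / √π * exp (-(x ^ 2 + ε))) * (x / √(x ^ 2 + ε))) x := by
  have h := (hasDerivAt_erfc √(x ^ 2 + ε)).comp x (hasDerivAt_sqrt_sq_add hε x)
  rwa [sq_sqrt (by positivity)] at h

lemma div_sqrt_sq_add_lt_one {ε : ℝ} (hε : 0 < ε) (x : ℝ) : x / √(x ^ 2 + ε) < 1 := by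
  have hlt : x < √(x ^ 2 + ε) := lt_sqrt_of_sq_lt (by linarith)
  exact (div_lt_one (by positivity)).2 hlt

/-- For every `ε > 0`, the function `r u = erfc u − e^ε · erfc (√(u² + ε))` is strictly
decreasing on the whole real line. -/
theorem strictAnti_erfc_sub_exp_mul_erfc (ε : ℝ) (hε : 0 < ε) :
    StrictAnti (fun u : ℝ => erfc u - Real.exp ε * erfc (Real.sqrt (u ^ 2 + ε))) := by
  refine strictAnti_of_hasDerivAt_neg
    (f' := fun u => 2 / √π * exp (-u ^ 2) * (u / √(u ^ 2 + ε) - 1)) (fun x => ?_) (fun x => ?_)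
  · have hexp : exp ε * exp (-(x ^ 2 + ε)) = exp (-x ^ 2) := by
      rw [← exp_add]; ring_nf
    refine ((hasDerivAt_erfc x).sub
      ((hasDerivAt_erfc_sqrt_sq_add hε x).const_mul (exp ε))).congr_deriv ?_
    linear_combination (2 / √π * (x / √(x ^ 2 + ε))) * hexp
  · exact mul_neg_of_pos_of_neg (by positivity) (sub_neg.2 (div_sqrt_sq_add_lt_one hε x))
end

section
/- The function s(ε) = e^ε · erfc(√ε) is strictly decreasing on (0, ∞), and the set of values it takes on (0, ∞) is exactly the open interval (0, 1). -/
open Real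

open MeasureTheory Set Filter

namespace ErfcAux

lemma sqrt_pi_pos : 0 < Real.sqrt Real.pi := Real.sqrt_pos.2 Real.pi_pos

lemma integrable_gauss : IntegrableOn (fun t : ℝ => Real.exp (-t ^ 2)) (Set.Ioi 0) := by
  have := (integrable_exp_neg_mul_sq (b := 1) one_pos).integrableOn (s := Set.Ioi (0:ℝ))
  simpa using this

lemma gauss_Ioi_zero : ∫ t in Set.Ioi (0:ℝ), Real.exp (-t ^ 2) = Real.sqrt Real.pi / 2 := by
  have := integral_gaussian_Ioi 1
  simpa using this

/-- erfc as an integral over `Ioi x`, for `x ≥ 0`. -/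
lemma erfc_eq {x : ℝ} (hx : 0 ≤ x) :
    erfc x = 2 / Real.sqrt Real.pi * ∫ t in Set.Ioi x, Real.exp (-t ^ 2) := by
  have hsplit : (∫ t in Set.Ioc (0:ℝ) x, Real.exp (-t ^ 2))
      + ∫ t in Set.Ioi x, Real.exp (-t ^ 2) = ∫ t in Set.Ioi (0:ℝ), Real.exp (-t ^ 2) := by
    rw [← setIntegral_union (Set.Ioc_disjoint_Ioi le_rfl) measurableSet_Ioi
      (integrable_gauss.mono_set Set.Ioc_subset_Ioi_self)
      (integrable_gauss.mono_set (Set.Ioi_subset_Ioi hx)),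
      Set.Ioc_union_Ioi_eq_Ioi hx]
  have h0x : (∫ t in (0:ℝ)..x, Real.exp (-t ^ 2)) = ∫ t in Set.Ioc (0:ℝ) x, Real.exp (-t ^ 2) :=
    intervalIntegral.integral_of_le hx
  have : (∫ t in Set.Ioi x, Real.exp (-t ^ 2))
      = Real.sqrt Real.pi / 2 - ∫ t in (0:ℝ)..x, Real.exp (-t ^ 2) := by
    rw [h0x, ← gauss_Ioi_zero, ← hsplit]; ring
  rw [erfc, erf, this]
  field_simp

lemma integral_Ioi_comp_add (c : ℝ) (f : ℝ → ℝ) :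
    (∫ x in Set.Ioi (0:ℝ), f (x + c)) = ∫ x in Set.Ioi c, f x := by
  have A : MeasurableEmbedding fun x : ℝ => x + c :=
    (Homeomorph.addRight c).isClosedEmbedding.measurableEmbedding
  have h := A.setIntegral_map (μ := volume) f (Set.Ioi c)
  rw [map_add_right_eq_self volume c] at h
  have hpre : (fun x : ℝ => x + c) ⁻¹' Set.Ioi c = Set.Ioi 0 := by ext x; simp
  rw [hpre] at h
  exact h.symm

/-- The key representation: `e^ε · erfc(√ε) = (2/√π) ∫₀^∞ e^{-v² - 2v√ε} dv`. -/
lemma s_repr {ε : ℝ} (hε : 0 ≤ ε) :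
    Real.exp ε * erfc (Real.sqrt ε)
      = 2 / Real.sqrt Real.pi
        * ∫ v in Set.Ioi (0:ℝ), Real.exp (-v ^ 2 - 2 * v * Real.sqrt ε) := by
  rw [erfc_eq (Real.sqrt_nonneg ε), ← integral_Ioi_comp_add (Real.sqrt ε)
    (fun t => Real.exp (-t ^ 2))]
  rw [← mul_assoc, mul_comm (Real.exp ε) (2 / Real.sqrt Real.pi), mul_assoc,
    ← integral_const_mul]
  congr 1
  refine setIntegral_congr_fun measurableSet_Ioi (fun v _ => ?_)
  rw [← Real.exp_add]
  congr 1
  have h2 : Real.sqrt ε ^ 2 = ε := Real.sq_sqrt hε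
  nlinarith [h2]

lemma integrable_g {c : ℝ} (hc : 0 ≤ c) :
    IntegrableOn (fun v : ℝ => Real.exp (-v ^ 2 - 2 * v * c)) (Set.Ioi 0) := by
  refine Integrable.mono integrable_gauss ?_ ?_
  · exact (Real.continuous_exp.comp (by continuity)).aestronglyMeasurable
  · filter_upwards [ae_restrict_mem measurableSet_Ioi] with v hv
    simp only [Real.norm_eq_abs, Real.abs_exp]
    apply Real.exp_le_exp.2
    nlinarith [le_of_lt (show (0:ℝ) < v from hv)]

lemma integral_lt {c d : ℝ} (hc : 0 ≤ c) (hcd : c < d) :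
    (∫ v in Set.Ioi (0:ℝ), Real.exp (-v ^ 2 - 2 * v * d))
      < ∫ v in Set.Ioi (0:ℝ), Real.exp (-v ^ 2 - 2 * v * c) := by
  have hd : (0:ℝ) ≤ d := hc.trans hcd.le
  rw [← sub_pos, ← integral_sub (integrable_g hc) (integrable_g hd)]
  have hsub : Set.Ioi (0:ℝ) ⊆ Function.support
      (fun v => Real.exp (-v ^ 2 - 2 * v * c) - Real.exp (-v ^ 2 - 2 * v * d))
        ∩ Set.Ioi 0 := by
    intro v hv
    refine ⟨?_, hv⟩
    have hv' : (0:ℝ) < v := hv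
    have hlt : Real.exp (-v ^ 2 - 2 * v * d) < Real.exp (-v ^ 2 - 2 * v * c) :=
      Real.exp_lt_exp.2 (by nlinarith)
    exact ne_of_gt (sub_pos.2 hlt)
  rw [setIntegral_pos_iff_support_of_nonneg_ae]
  · refine lt_of_lt_of_le ?_ (measure_mono hsub)
    rw [Real.volume_Ioi]; exact ENNReal.zero_lt_top
  · filter_upwards [ae_restrict_mem measurableSet_Ioi] with v hv
    have hv' : (0:ℝ) < v := hv
    have : Real.exp (-v ^ 2 - 2 * v * d) ≤ Real.exp (-v ^ 2 - 2 * v * c) :=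
      Real.exp_le_exp.2 (by nlinarith)
    simp only [Pi.zero_apply]
    linarith
  · exact (integrable_g hc).sub (integrable_g hd)

lemma s_pos {ε : ℝ} (hε : 0 ≤ ε) : 0 < Real.exp ε * erfc (Real.sqrt ε) := by
  rw [s_repr hε]
  apply mul_pos (by positivity)
  have hsub : Set.Ioi (0:ℝ) ⊆ Function.support
      (fun v => Real.exp (-v ^ 2 - 2 * v * Real.sqrt ε)) ∩ Set.Ioi 0 :=
    fun v hv => ⟨(Real.exp_pos _).ne', hv⟩
  rw [setIntegral_pos_iff_support_of_nonneg_ae]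
  · refine lt_of_lt_of_le ?_ (measure_mono hsub)
    rw [Real.volume_Ioi]; exact ENNReal.zero_lt_top
  · filter_upwards with v using (Real.exp_pos _).le
  · exact integrable_g (Real.sqrt_nonneg ε)

lemma s_lt_one {ε : ℝ} (hε : 0 < ε) : Real.exp ε * erfc (Real.sqrt ε) < 1 := by
  rw [s_repr hε.le]
  have h := integral_lt (c := 0) (d := Real.sqrt ε) le_rfl (Real.sqrt_pos.2 hε)
  have h0 : (∫ v in Set.Ioi (0:ℝ), Real.exp (-v ^ 2 - 2 * v * 0))
      = Real.sqrt Real.pi / 2 := by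
    rw [← gauss_Ioi_zero]
    refine setIntegral_congr_fun measurableSet_Ioi (fun v _ => ?_)
    ring_nf
  calc 2 / Real.sqrt Real.pi * ∫ v in Set.Ioi (0:ℝ), Real.exp (-v ^ 2 - 2 * v * Real.sqrt ε)
      < 2 / Real.sqrt Real.pi * (Real.sqrt Real.pi / 2) := by
        apply mul_lt_mul_of_pos_left _ (by positivity)
        rw [← h0]; exact h
    _ = 1 := by field_simp

lemma strictAnti : StrictAntiOn (fun ε : ℝ => Real.exp ε * erfc (Real.sqrt ε)) (Set.Ioi 0) := by
  intro a ha b hb hab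
  have ha' : (0:ℝ) < a := ha
  simp only
  rw [s_repr ha'.le, s_repr (ha'.trans hab).le]
  apply mul_lt_mul_of_pos_left _ (by positivity)
  exact integral_lt (Real.sqrt_nonneg a) (Real.sqrt_lt_sqrt ha'.le hab)

lemma s_continuous : Continuous (fun ε : ℝ => Real.exp ε * erfc (Real.sqrt ε)) := by
  have herf : Continuous erf := by
    apply Continuous.mul continuous_const
    exact intervalIntegral.continuous_primitive
      (fun a b => ((Real.continuous_exp.comp (by continuity)).intervalIntegrable a b)) 0
  exact Real.continuous_exp.mul
    ((continuous_const.sub herf).comp Real.continuous_sqrt)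

lemma s_zero : Real.exp 0 * erfc (Real.sqrt 0) = 1 := by
  simp [erfc, erf]

lemma s_le {ε : ℝ} (hε : 0 < ε) :
    Real.exp ε * erfc (Real.sqrt ε) ≤ 2 / Real.sqrt Real.pi * (2 * Real.sqrt ε)⁻¹ := by
  have hs : (0:ℝ) < Real.sqrt ε := Real.sqrt_pos.2 hε
  rw [s_repr hε.le]
  have hint : (∫ v in Set.Ioi (0:ℝ), Real.exp (-(2 * Real.sqrt ε * v)))
      = (2 * Real.sqrt ε)⁻¹ := by
    have := integral_comp_mul_left_Ioi (fun x => Real.exp (-x)) 0 (by positivity :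
      (0:ℝ) < 2 * Real.sqrt ε)
    simp only [mul_zero, smul_eq_mul] at this
    rw [this, integral_exp_neg_Ioi_zero, mul_one]
  rw [← hint]
  apply mul_le_mul_of_nonneg_left _ (by positivity)
  apply setIntegral_mono_on (integrable_g hs.le) _ measurableSet_Ioi
  · intro v hv
    have hv' : (0:ℝ) < v := hv
    apply Real.exp_le_exp.2
    nlinarith
  · have : IntegrableOn (fun x : ℝ => Real.exp (-(2 * Real.sqrt ε) * x)) (Set.Ioi 0) :=
      exp_neg_integrableOn_Ioi 0 (by positivity)
    simpa [mul_assoc] using this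

lemma s_tendsto_zero :
    Tendsto (fun ε : ℝ => Real.exp ε * erfc (Real.sqrt ε)) atTop (nhds 0) := by
  have hb : Tendsto (fun ε : ℝ => 2 / Real.sqrt Real.pi * (2 * Real.sqrt ε)⁻¹) atTop (nhds 0) := by
    have hsq : Tendsto Real.sqrt atTop atTop := by
      rw [tendsto_atTop]
      intro b
      filter_upwards [eventually_ge_atTop (b ^ 2 ⊔ 0)] with x hx
      calc b ≤ |b| := le_abs_self b
        _ = Real.sqrt (b ^ 2) := (Real.sqrt_sq_eq_abs b).symm
        _ ≤ Real.sqrt x := Real.sqrt_le_sqrt (le_trans le_sup_left hx)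
    have h1 : Tendsto (fun ε : ℝ => 2 * Real.sqrt ε) atTop atTop :=
      hsq.const_mul_atTop two_pos
    have := (h1.inv_tendsto_atTop).const_mul (2 / Real.sqrt Real.pi)
    simpa using this
  refine squeeze_zero' ?_ ?_ hb
  · filter_upwards [eventually_gt_atTop (0:ℝ)] with ε hε using (s_pos hε.le).le
  · filter_upwards [eventually_gt_atTop (0:ℝ)] with ε hε using s_le hε

end ErfcAux

/-- The function `s ε = e^ε · erfc (√ε)` is strictly decreasing on `(0, ∞)`, and its image
of `(0, ∞)` is exactly the open interval `(0, 1)`. -/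
theorem strictAntiOn_exp_mul_erfc_sqrt_and_image :
    StrictAntiOn (fun ε : ℝ => Real.exp ε * erfc (Real.sqrt ε)) (Set.Ioi 0) ∧
      (fun ε : ℝ => Real.exp ε * erfc (Real.sqrt ε)) '' Set.Ioi 0 = Set.Ioo 0 1 := by
  set s := fun ε : ℝ => Real.exp ε * erfc (Real.sqrt ε) with hs
  refine ⟨ErfcAux.strictAnti, ?_⟩
  apply Set.Subset.antisymm
  · rintro y ⟨ε, hε, rfl⟩
    exact ⟨ErfcAux.s_pos (le_of_lt hε), ErfcAux.s_lt_one hε⟩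
  · rintro y ⟨hy0, hy1⟩
    -- find small δ with s δ > y
    have hcont := ErfcAux.s_continuous
    have h0 : Filter.Tendsto s (nhdsWithin 0 (Set.Ioi 0)) (nhds 1) := by
      have := hcont.continuousAt (x := (0:ℝ))
      rw [ContinuousAt, ErfcAux.s_zero] at this
      exact this.mono_left nhdsWithin_le_nhds
    have hδ : ∃ δ > (0:ℝ), y < s δ := by
      have : ∀ᶠ ε in nhdsWithin 0 (Set.Ioi 0), y < s ε :=
        h0.eventually (eventually_gt_nhds hy1)
      rcases (this.and self_mem_nhdsWithin).exists with ⟨δ, h1, h2⟩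
      exact ⟨δ, h2, h1⟩
    obtain ⟨δ, hδ0, hδy⟩ := hδ
    have hM : ∃ M, δ < M ∧ s M < y := by
      have h1 : ∀ᶠ M in atTop, s M < y :=
        ErfcAux.s_tendsto_zero.eventually (eventually_lt_nhds hy0)
      rcases (h1.and (eventually_gt_atTop δ)).exists with ⟨M, h2, h3⟩
      exact ⟨M, h3, h2⟩
    obtain ⟨M, hδM, hMy⟩ := hM
    have : y ∈ Set.Icc (s M) (s δ) := ⟨hMy.le, hδy.le⟩
    have him := intermediate_value_Icc' hδM.le (hcont.continuousOn (s := Set.Icc δ M))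
    obtain ⟨c, hc, hcy⟩ := him this
    exact ⟨c, lt_of_lt_of_le hδ0 hc.1, hcy⟩
end

section
/- Let ε ≥ 0.01, let 0 < δ ≤ 0.05, let Δ > 0, and let a be a real number satisfying erfc(a) − e^ε · erfc(√(a² + ε)) = 2δ. Then (a + √(a² + ε)) · Δ / (ε·√2) < √(2·ln(1/(2δ))) · Δ/ε + Δ/√(2ε). -/
/-!
Write `L = log (1 / (2δ))`. The right-hand side equals `(2√L + √ε) Δ / (ε√2)`, and
`a + √(a² + ε) ≤ 2 max a 0 + √ε`, so it suffices that `max a 0 < √L`. Since `erfc > 0`, the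
equation for `a` gives `2δ < erfc a`. For `a ≥ 1` the Gaussian tail bound `erfc a ≤ e^{-a²}`
then forces `a² < L`; for `a < 1` it is enough that `L ≥ 1`, i.e. `2δ ≤ e⁻¹`.
-/

open Real

section ErrorFunction

open MeasureTheory Set Filter

lemma integrableOn_exp_neg_sq (s : Set ℝ) : IntegrableOn (fun t : ℝ => exp (-t ^ 2)) s := by
  simpa using (integrable_exp_neg_mul_sq one_pos).integrableOn (s := s)

lemma integrableOn_mul_exp_neg_sq (s : Set ℝ) :
    IntegrableOn (fun t : ℝ => t * exp (-t ^ 2)) s := by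
  simpa using (integrable_mul_exp_neg_mul_sq one_pos).integrableOn (s := s)

lemma erfc_pos (x : ℝ) : 0 < erfc x := by
  have htail : 0 < ∫ t in Ioi x, exp (-t ^ 2) := by
    refine (setIntegral_pos_iff_support_of_nonneg_ae (ae_of_all _ fun t => (exp_pos _).le)
      (integrableOn_exp_neg_sq _)).2 ?_
    simp [Function.support, (exp_pos _).ne']
  rw [erfc_eq_integral_Ioi]
  positivity

lemma integral_Ioi_exp_neg_sq_le {x : ℝ} (hx : 0 < x) :
    ∫ t in Ioi x, exp (-t ^ 2) ≤ exp (-x ^ 2) / (2 * x) := by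
  calc ∫ t in Ioi x, exp (-t ^ 2)
      ≤ ∫ t in Ioi x, t * exp (-t ^ 2) / x := by
        refine setIntegral_mono_on (integrableOn_exp_neg_sq _)
          ((integrableOn_mul_exp_neg_sq _).div_const x) measurableSet_Ioi fun t ht => ?_
        rw [le_div_iff₀ hx]
        nlinarith [exp_pos (-t ^ 2), mem_Ioi.1 ht]
    _ = exp (-x ^ 2) / (2 * x) := by
        rw [integral_div, integral_Ioi_mul_exp_neg_sq, div_div]

end ErrorFunction

lemma one_le_log_one_div {y : ℝ} (hy : 0 < y) (hye : y ≤ exp (-1)) : 1 ≤ log (1 / y) := by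
  rw [one_div, log_inv, le_neg]
  exact (log_le_iff_le_exp hy).2 hye

lemma lt_sqrt_log_one_div_of_lt_erfc {y a : ℝ} (hy : 0 < y) (hye : y ≤ exp (-1))
    (h : y < erfc a) : a < √(log (1 / y)) := by
  rcases lt_or_ge a 1 with ha | ha
  · exact ha.trans_le (one_le_sqrt.2 (one_le_log_one_div hy hye))
  · have hlog : log y < -a ^ 2 := (log_lt_iff_lt_exp hy).2 (h.trans_le (erfc_le_exp_neg_sq ha))
    rw [lt_sqrt (by linarith), one_div, log_inv]
    linarith

lemma add_sqrt_sq_add_le (a : ℝ) {ε : ℝ} (hε : 0 ≤ ε) : a + √(a ^ 2 + ε) ≤ 2 * max a 0 + √ε := by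
  have hsqrt : √(a ^ 2 + ε) ≤ |a| + √ε := by
    refine sqrt_le_iff.2 ⟨by positivity, ?_⟩
    nlinarith [sq_abs a, sq_sqrt hε, abs_nonneg a, sqrt_nonneg ε]
  rcases le_total a 0 with ha | ha
  · rw [abs_of_nonpos ha] at hsqrt
    rw [max_eq_right ha]
    linarith
  · rw [abs_of_nonneg ha] at hsqrt
    rw [max_eq_left ha]
    linarith

/-- If `ε ≥ 0.01`, `0 < δ ≤ 0.05`, `Δ > 0`, and `a` satisfies
`erfc a − e^ε · erfc (√(a² + ε)) = 2δ`, then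
`(a + √(a² + ε)) · Δ / (ε·√2) < √(2·ln(1/(2δ))) · Δ/ε + Δ/√(2ε)`. -/
theorem sigma_DP_OPT_lt (ε δ Δ a : ℝ)
    (hε : 0.01 ≤ ε) (hδ0 : 0 < δ) (hδ1 : δ ≤ 0.05) (hΔ : 0 < Δ)
    (ha : erfc a - Real.exp ε * erfc (Real.sqrt (a ^ 2 + ε)) = 2 * δ) :
    (a + Real.sqrt (a ^ 2 + ε)) * Δ / (ε * Real.sqrt 2) <
      Real.sqrt (2 * Real.log (1 / (2 * δ))) * Δ / ε + Δ / Real.sqrt (2 * ε) := by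
  set L := log (1 / (2 * δ))
  have hε0 : 0 < ε := by linarith
  have hδe : 2 * δ ≤ exp (-1) := by linarith [exp_neg_one_gt_d9]
  have herfc : 2 * δ < erfc a := by
    linarith [mul_pos (exp_pos ε) (erfc_pos √(a ^ 2 + ε))]
  have hL : 1 ≤ L := one_le_log_one_div (by positivity) hδe
  have hmax : max a 0 < √L :=
    max_lt (lt_sqrt_log_one_div_of_lt_erfc (by positivity) hδe herfc) (sqrt_pos.2 (by linarith))
  have hrhs : √(2 * L) * Δ / ε + Δ / √(2 * ε) = (2 * √L + √ε) * Δ / (ε * √2) := by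
    rw [sqrt_mul zero_le_two, sqrt_mul zero_le_two]
    have h2 : √2 * √2 = 2 := mul_self_sqrt zero_le_two
    have hεε : √ε * √ε = ε := mul_self_sqrt hε0.le
    field_simp
    linear_combination (√L * √ε) * h2 - hεε
  rw [hrhs]
  gcongr ?_ * _ / _
  linarith [add_sqrt_sq_add_le a hε0.le]
end

section
/- Let ε > 0, let 0 < δ < 1, let Δ > 0, let a be a real number satisfying erfc(a) − e^ε · erfc(√(a² + ε)) = 2δ, and let t > 0 satisfy erf(t) = δ. Then (a + √(a² + ε)) · Δ / (ε·√2) < Δ / (2√2 · t). (That is, for any ε > 0 and 0 < δ < 1, the optimal Gaussian noise amount σ_DP-OPT for (ε,δ)-differential privacy is less than Δ/(2√2·inverf(δ)), the optimal Gaussian noise amount for (0,δ)-differential privacy.) -/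
open Real

private lemma cont_expsq : Continuous fun t : ℝ => Real.exp (-t ^ 2) := by
  continuity

private lemma ii_expsq (a b : ℝ) :
    IntervalIntegrable (fun t : ℝ => Real.exp (-t ^ 2)) MeasureTheory.volume a b :=
  cont_expsq.intervalIntegrable a b

private lemma sqrtpi_pos : 0 < Real.sqrt Real.pi := Real.sqrt_pos.mpr Real.pi_pos

private lemma erf_sub (x y : ℝ) :
    erf y - erf x = 2 / Real.sqrt Real.pi * ∫ t in x..y, Real.exp (-t ^ 2) := by
  unfold erf
  rw [← mul_sub, intervalIntegral.integral_interval_sub_left (ii_expsq 0 y) (ii_expsq 0 x)]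

private lemma erf_strictMono : StrictMono erf := by
  intro x y hxy
  have h := erf_sub x y
  have hpos : 0 < ∫ t in x..y, Real.exp (-t ^ 2) :=
    intervalIntegral.intervalIntegral_pos_of_pos_on (ii_expsq x y)
      (fun t _ => Real.exp_pos _) hxy
  have h2 : 0 < 2 / Real.sqrt Real.pi * ∫ t in x..y, Real.exp (-t ^ 2) := by
    have := sqrtpi_pos; positivity
  linarith

private lemma erf_le_one (x : ℝ) : erf x ≤ 1 := by
  rcases le_or_gt x 0 with hx | hx
  · have : erf x ≤ erf 0 := by
      rcases eq_or_lt_of_le hx with h | h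
      · exact le_of_eq (by rw [h])
      · exact le_of_lt (erf_strictMono h)
    have h0 : erf 0 = 0 := by simp [erf]
    linarith
  · have hint : (∫ t in (0:ℝ)..x, Real.exp (-t ^ 2)) ≤ Real.sqrt Real.pi / 2 := by
      rw [intervalIntegral.integral_of_le hx.le]
      have h1 : ∫ t in Set.Ioi (0:ℝ), Real.exp (-t ^ 2) = Real.sqrt Real.pi / 2 := by
        have := integral_gaussian_Ioi 1
        simpa using this
      rw [← h1]
      apply MeasureTheory.setIntegral_mono_set
      · exact ((integrable_exp_neg_mul_sq one_pos).congr (by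
          filter_upwards with t; ring_nf)).integrableOn
      · filter_upwards with t using (Real.exp_pos _).le
      · filter_upwards with t ht using Set.Ioc_subset_Ioi_self ht
    unfold erf
    have hs := sqrtpi_pos
    have h2 : 2 / Real.sqrt Real.pi * (∫ t in (0:ℝ)..x, Real.exp (-t ^ 2))
        ≤ 2 / Real.sqrt Real.pi * (Real.sqrt Real.pi / 2) :=
      mul_le_mul_of_nonneg_left hint (by positivity)
    have h3 : 2 / Real.sqrt Real.pi * (Real.sqrt Real.pi / 2) = 1 := by field_simp
    linarith

/-- shifted integral lemma -/
private lemma shift_lt (L c : ℝ) (hL : 0 < L) (hc : 0 < c) :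
    (∫ s in (c - L)..(c + L), Real.exp (-s ^ 2)) <
      ∫ s in (-L)..L, Real.exp (-s ^ 2) := by
  have key : (∫ s in (-L)..L, Real.exp (-s ^ 2)) - (∫ s in (c - L)..(c + L), Real.exp (-s ^ 2))
      = (∫ u in (-L)..(c - L), Real.exp (-u ^ 2)) - ∫ u in (-L)..(c - L), Real.exp (-(u + 2*L) ^ 2) := by
    have hcomp : (∫ u in (-L)..(c - L), Real.exp (-(u + 2*L) ^ 2))
        = ∫ s in L..(c + L), Real.exp (-s ^ 2) := by
      have h := intervalIntegral.integral_comp_add_right (a := -L) (b := c - L)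
        (fun s => Real.exp (-s ^ 2)) (2*L)
      have e1 : -L + 2*L = L := by ring
      have e2 : c - L + 2*L = c + L := by ring
      rw [e1, e2] at h
      exact h
    rw [hcomp]
    have h3 := intervalIntegral.integral_add_adjacent_intervals (ii_expsq (c-L) L) (ii_expsq L (c+L))
    have h4 := intervalIntegral.integral_add_adjacent_intervals (ii_expsq (-L) (c-L)) (ii_expsq (c-L) L)
    linarith
  have hpos : 0 < ∫ u in (-L)..(c - L), (Real.exp (-u ^ 2) - Real.exp (-(u + 2*L) ^ 2)) := by
    apply intervalIntegral.intervalIntegral_pos_of_pos_on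
    · exact (cont_expsq.sub (by continuity)).intervalIntegrable _ _
    · intro u hu
      have : (u + 2*L)^2 > u^2 := by nlinarith [hu.1, hu.2]
      have := Real.exp_lt_exp.mpr (by linarith : -(u + 2*L)^2 < -u^2)
      linarith
    · linarith
  rw [intervalIntegral.integral_sub (ii_expsq _ _) ((by continuity : Continuous fun u : ℝ => Real.exp (-(u + 2*L) ^ 2)).intervalIntegrable _ _)] at hpos
  linarith

/-- For `ε > 0`, `0 < δ < 1`, `Δ > 0`, `a` solving
`erfc a − e^ε · erfc (√(a² + ε)) = 2δ`, and `t > 0` with `erf t = δ` (i.e. `t = inverf δ`):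
`(a + √(a² + ε)) · Δ / (ε·√2) < Δ / (2√2 · t)`. -/
theorem sigma_DP_OPT_lt_eps_independent_bound (ε δ Δ a t : ℝ)
    (hε : 0 < ε) (hδ0 : 0 < δ) (hδ1 : δ < 1) (hΔ : 0 < Δ)
    (ha : erfc a - Real.exp ε * erfc (Real.sqrt (a ^ 2 + ε)) = 2 * δ)
    (ht : 0 < t) (hterf : erf t = δ) :
    (a + Real.sqrt (a ^ 2 + ε)) * Δ / (ε * Real.sqrt 2) <
      Δ / (2 * Real.sqrt 2 * t) := by
  set b := Real.sqrt (a ^ 2 + ε) with hb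
  have hb0 : 0 ≤ b := Real.sqrt_nonneg _
  have hbsq : b ^ 2 = a ^ 2 + ε := Real.sq_sqrt (by nlinarith [sq_nonneg a])
  have habs : |a| < b := by
    have : a^2 < b^2 := by linarith
    nlinarith [abs_nonneg a, sq_abs a]
  have hab1 : 0 < a + b := by cases abs_lt.mp habs; linarith
  have hab2 : 0 < b - a := by cases abs_lt.mp habs; linarith
  -- step A: 2δ ≤ erf b - erf a
  have hA : 2 * δ ≤ erf b - erf a := by
    have h1 : erf b ≤ 1 := erf_le_one b
    have h2 : (1:ℝ) ≤ Real.exp ε := by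
      rw [← Real.exp_zero]; exact Real.exp_le_exp.mpr hε.le
    simp only [erfc] at ha
    nlinarith
  -- step B
  set L := (b - a) / 2 with hLdef
  set c := (a + b) / 2 with hcdef
  have hL : 0 < L := by positivity
  have hc : 0 < c := by positivity
  have hB : erf b - erf a < 2 * erf L := by
    have hshift := shift_lt L c hL hc
    have hca : c - L = a := by rw [hLdef, hcdef]; ring
    have hcb : c + L = b := by rw [hLdef, hcdef]; ring
    rw [hca, hcb] at hshift
    have hint2 : (∫ s in (-L)..L, Real.exp (-s ^ 2)) = 2 * ∫ s in (0:ℝ)..L, Real.exp (-s ^ 2) := by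
      have h4 := intervalIntegral.integral_add_adjacent_intervals (ii_expsq (-L) 0) (ii_expsq 0 L)
      have h5 : (∫ s in (-L)..(0:ℝ), Real.exp (-s ^ 2)) = ∫ s in (0:ℝ)..L, Real.exp (-s ^ 2) := by
        have := intervalIntegral.integral_comp_neg (fun s : ℝ => Real.exp (-s ^ 2)) (a := -L) (b := 0)
        simp only [neg_neg, neg_zero] at this
        rw [← this]
        congr 1; ext s; ring_nf
      linarith
    have herfsub := erf_sub a b
    have hspos := sqrtpi_pos
    have : erf b - erf a < 2 / Real.sqrt Real.pi * (2 * ∫ s in (0:ℝ)..L, Real.exp (-s ^ 2)) := by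
      rw [herfsub, ← hint2]
      have h2s : 0 < 2 / Real.sqrt Real.pi := by positivity
      exact (mul_lt_mul_iff_right₀ h2s).mpr hshift
    calc erf b - erf a < 2 / Real.sqrt Real.pi * (2 * ∫ s in (0:ℝ)..L, Real.exp (-s ^ 2)) := this
      _ = 2 * erf L := by unfold erf; ring
  -- step C
  have htL : t < L := by
    by_contra hcon
    push_neg at hcon
    have : erf L ≤ erf t := by
      rcases eq_or_lt_of_le hcon with h | h
      · rw [h]
      · exact (erf_strictMono h).le
    rw [hterf] at this
    linarith
  -- step D
  have hkey : 2 * t * (a + b) < ε := by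
    have h1 : 2 * t < b - a := by rw [hLdef] at htL; linarith
    have h2 : ε = (b - a) * (a + b) := by nlinarith
    nlinarith
  have hs2 : 0 < Real.sqrt 2 := by positivity
  rw [div_lt_div_iff₀ (by positivity) (by positivity)]
  nlinarith [mul_pos hΔ hs2, mul_pos (mul_pos hΔ hs2) ht, sq_nonneg (Real.sqrt 2)]
end

section
/- For all δ with 0 < δ < 0.5 and all ε with 0 < ε ≤ 1, writing L = ln(2/(√(16δ + 1) − 1)), one has √(2·ln(1.25/δ)) > (√(L + ε) + √L)/√2. (That is, the noise amount σ_Mechanism-2 = (√L + √(L + ε))·Δ/(ε√2) of Mechanism 2 is strictly smaller than the noise amount σ_Dwork-2014 = √(2 ln(1.25/δ))·Δ/ε of the classical Gaussian mechanism of Dwork and Roth, for all 0 < ε ≤ 1 and 0 < δ < 0.5.) -/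
open Real

/-- For `0 < δ < 0.5` and `0 < ε ≤ 1`, with `L = ln(2/(√(16δ + 1) − 1))`,
`√(2·ln(1.25/δ)) > (√(L + ε) + √L)/√2`. -/
theorem mechanism_two_beats_dwork_2014 (δ ε : ℝ) (hδ0 : 0 < δ) (hδ1 : δ < 0.5)
    (hε0 : 0 < ε) (hε1 : ε ≤ 1) :
    Real.sqrt (2 * Real.log (1.25 / δ)) >
      (Real.sqrt (Real.log (2 / (Real.sqrt (16 * δ + 1) - 1)) + ε) +
        Real.sqrt (Real.log (2 / (Real.sqrt (16 * δ + 1) - 1)))) / Real.sqrt 2 := by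
  set s := Real.sqrt (16 * δ + 1) with hs_def
  have hs0 : (0:ℝ) ≤ 16 * δ + 1 := by linarith
  have hssq : s ^ 2 = 16 * δ + 1 := Real.sq_sqrt hs0
  have hsnn : 0 ≤ s := Real.sqrt_nonneg _
  have hs1 : 1 < s := by nlinarith
  have hs3 : s < 3 := by nlinarith
  set L := Real.log (2 / (s - 1)) with hL_def
  have hx : (1:ℝ) < 2 / (s - 1) := by
    rw [lt_div_iff₀ (by linarith)]; linarith
  have hL0 : 0 < L := Real.log_pos hx
  have hsplit : (1.25 : ℝ) / δ = (10 / (s + 1)) * (2 / (s - 1)) := by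
    have hne1 : s - 1 ≠ 0 := by intro h; nlinarith
    have hne2 : s + 1 ≠ 0 := by intro h; nlinarith
    have hneδ : δ ≠ 0 := ne_of_gt hδ0
    field_simp
    nlinarith
  have hlog10 : (1/2 : ℝ) ≤ Real.log (10 / (s + 1)) := by
    rw [Real.le_log_iff_exp_le (by positivity)]
    have he : Real.exp (1/2) * Real.exp (1/2) = Real.exp 1 := by
      rw [← Real.exp_add]; norm_num
    have h1 : Real.exp 1 < 2.7182818286 := Real.exp_one_lt_d9
    have h2 : Real.exp (1/2 : ℝ) < 2.5 := by nlinarith [Real.exp_pos (1/2:ℝ)]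
    have h3 : (2.5:ℝ) ≤ 10 / (s + 1) := by
      rw [le_div_iff₀ (by linarith)]; nlinarith
    linarith
  have hA : L + 1/2 ≤ Real.log (1.25 / δ) := by
    rw [hsplit, Real.log_mul (by positivity) (ne_of_gt (div_pos two_pos (by linarith)))]
    linarith
  set u := Real.sqrt (L + ε) with hu_def
  set v := Real.sqrt L with hv_def
  have hu0 : 0 ≤ u := Real.sqrt_nonneg _
  have hv0 : 0 ≤ v := Real.sqrt_nonneg _
  have husq : u ^ 2 = L + ε := Real.sq_sqrt (by linarith)
  have hvsq : v ^ 2 = L := Real.sq_sqrt hL0.le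
  have huv : u * v < L + 1/2 := by
    nlinarith [mul_nonneg hu0 hv0, sq_nonneg (u * v - (L + 1/2))]
  have hrhs0 : 0 ≤ (u + v) / Real.sqrt 2 := by positivity
  have h2 : Real.sqrt 2 ^ 2 = 2 := Real.sq_sqrt (by norm_num)
  rw [gt_iff_lt]
  refine (Real.lt_sqrt hrhs0).mpr ?_
  have hrw : ((u + v) / Real.sqrt 2) ^ 2 = (u + v) ^ 2 / 2 := by
    rw [div_pow, h2]
  rw [hrw]
  nlinarith
end

section
/- Probabilistic differential privacy implies differential privacy: let (Ω, 𝔉) be a measurable space, let λ be a measure on it, let f, g : Ω → [0, ∞] be measurable, and suppose μ = λ.withDensity f and ν = λ.withDensity g are probability measures. Let ε ∈ ℝ and δ ∈ [0, 1]. If μ({y ∈ Ω : f(y) > e^ε · g(y)}) ≤ δ, then for every measurable set S ⊆ Ω one has μ(S) ≤ e^ε · ν(S) + δ. -/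
open MeasureTheory ENNReal

/-! Split a measurable set `S` along the bad set `B = {y | e^ε g y < f y}`. Off `B` the density
`f` is at most `e^ε g`, so `μ (S \ B) ≤ e^ε ν S`, while `μ (S ∩ B) ≤ μ B ≤ δ`. -/

namespace MeasureTheory.Measure

variable {Ω : Type*} [MeasurableSpace Ω] {lam : Measure Ω} {f g : Ω → ℝ≥0∞}

theorem withDensity_apply_le_const_mul_of_le (c : ℝ≥0∞) (hg : Measurable g) {T : Set Ω}
    (hT : MeasurableSet T) (hfg : ∀ y ∈ T, f y ≤ c * g y) :
    lam.withDensity f T ≤ c * lam.withDensity g T := by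
  rw [withDensity_apply _ hT, withDensity_apply _ hT, ← lintegral_const_mul _ hg]
  exact setLIntegral_mono (hg.const_mul c) hfg

theorem withDensity_apply_le_const_mul_add_setOf_lt (c : ℝ≥0∞) (hf : Measurable f)
    (hg : Measurable g) {S : Set Ω} (hS : MeasurableSet S) :
    lam.withDensity f S ≤
      c * lam.withDensity g S + lam.withDensity f {y | c * g y < f y} := by
  set B := {y | c * g y < f y}
  have hB : MeasurableSet B := measurableSet_lt (hg.const_mul c) hf
  have h_good : lam.withDensity f (S \ B) ≤ c * lam.withDensity g S :=
    (withDensity_apply_le_const_mul_of_le c hg (hS.diff hB) fun _ hy => not_lt.mp hy.2).trans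
      (by gcongr; exact Set.sdiff_subset)
  calc lam.withDensity f S ≤ lam.withDensity f (S \ B) + lam.withDensity f (S ∩ B) := by
        rw [add_comm]; exact measure_le_inter_add_sdiff _ _ _
    _ ≤ c * lam.withDensity g S + lam.withDensity f B :=
        add_le_add h_good (measure_mono Set.inter_subset_right)

end MeasureTheory.Measure

theorem pDP_implies_DP_general {Ω : Type*} [MeasurableSpace Ω] (lam : Measure Ω)
    (f g : Ω → ℝ≥0∞) (hf : Measurable f) (hg : Measurable g)
    (μ ν : Measure Ω) (hμ : μ = lam.withDensity f) (hν : ν = lam.withDensity g)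
    (ε : ℝ) (δ : ℝ≥0∞)
    (hpDP : μ {y | f y > ENNReal.ofReal (Real.exp ε) * g y} ≤ δ) :
    ∀ S : Set Ω, MeasurableSet S → μ S ≤ ENNReal.ofReal (Real.exp ε) * ν S + δ := by
  intro S hS
  subst hμ hν
  exact (Measure.withDensity_apply_le_const_mul_add_setOf_lt _ hf hg hS).trans (by gcongr)

/-- Probabilistic differential privacy implies differential privacy: if `μ = λ.withDensity f`
and `ν = λ.withDensity g` are probability measures and
`μ {y : f y > e^ε · g y} ≤ δ`, then for every measurable `S`,
`μ S ≤ e^ε · ν S + δ`. -/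
theorem pDP_implies_DP {Ω : Type*} [MeasurableSpace Ω] (lam : Measure Ω)
    (f g : Ω → ℝ≥0∞) (hf : Measurable f) (hg : Measurable g)
    (μ ν : Measure Ω) (hμ : μ = lam.withDensity f) (hν : ν = lam.withDensity g)
    (hμp : IsProbabilityMeasure μ) (hνp : IsProbabilityMeasure ν)
    (ε : ℝ) (δ : ℝ≥0∞) (hδ : δ ≤ 1)
    (hpDP : μ {y | f y > ENNReal.ofReal (Real.exp ε) * g y} ≤ δ) :
    ∀ S : Set Ω, MeasurableSet S → μ S ≤ ENNReal.ofReal (Real.exp ε) * ν S + δ :=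
  pDP_implies_DP_general lam f g hf hg μ ν hμ hν ε δ hpDP
end

section
/- Differential privacy implies probabilistic differential privacy with a small loss in parameters: let (Ω, 𝔉) be a measurable space, let λ be a measure on it, let f, g : Ω → [0, ∞] be measurable, and suppose μ = λ.withDensity f and ν = λ.withDensity g are probability measures. Let ε ≥ 0 and δ ≥ 0, and suppose that for every measurable set S ⊆ Ω both μ(S) ≤ e^ε · ν(S) + δ and ν(S) ≤ e^ε · μ(S) + δ hold. Then for every ε* > ε, μ({y ∈ Ω : f(y) > e^{ε*} · g(y)} ∪ {y ∈ Ω : f(y) < e^{−ε*} · g(y)}) ≤ δ · (1 + e^{−ε*}) / (1 − e^{ε − ε*}). -/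
open MeasureTheory ENNReal

lemma aux_cancel {x : ℝ≥0∞} (hx : x ≠ ⊤) {c d : ℝ} (hc0 : 0 ≤ c) (hc1 : c < 1) (hd : 0 ≤ d)
    (h : x ≤ ENNReal.ofReal c * x + ENNReal.ofReal d) : x ≤ ENNReal.ofReal (d / (1 - c)) := by
  have hcx : ENNReal.ofReal c * x ≠ ⊤ := ENNReal.mul_ne_top ENNReal.ofReal_ne_top hx
  have h1 : x.toReal ≤ c * x.toReal + d := by
    have := ENNReal.toReal_mono (by simp [ENNReal.add_ne_top, hcx]) h
    rwa [ENNReal.toReal_add hcx ENNReal.ofReal_ne_top, ENNReal.toReal_mul,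
      ENNReal.toReal_ofReal hc0, ENNReal.toReal_ofReal hd] at this
  have h2 : 0 < 1 - c := by linarith
  have h3 : x.toReal ≤ d / (1 - c) := by
    rw [le_div_iff₀ h2]; nlinarith
  calc x = ENNReal.ofReal x.toReal := (ENNReal.ofReal_toReal hx).symm
    _ ≤ _ := ENNReal.ofReal_le_ofReal h3

/-- Differential privacy implies probabilistic differential privacy with a small loss in
parameters: if `μ = λ.withDensity f` and `ν = λ.withDensity g` are probability measures such
that `μ S ≤ e^ε · ν S + δ` and `ν S ≤ e^ε · μ S + δ` for all measurable `S`, then for every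
`ε* > ε`, the `μ`-measure of the set where the privacy loss `ln(f y / g y)` falls outside
`[−ε*, ε*]` is at most `δ · (1 + e^{−ε*}) / (1 − e^{ε − ε*})`. -/
theorem DP_implies_pDP {Ω : Type*} [MeasurableSpace Ω] (lam : Measure Ω)
    (f g : Ω → ℝ≥0∞) (hf : Measurable f) (hg : Measurable g)
    (μ ν : Measure Ω) (hμ : μ = lam.withDensity f) (hν : ν = lam.withDensity g)
    (hμp : IsProbabilityMeasure μ) (hνp : IsProbabilityMeasure ν)
    (ε δ : ℝ) (hε : 0 ≤ ε) (hδ : 0 ≤ δ)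
    (hDP : ∀ S : Set Ω, MeasurableSet S →
      μ S ≤ ENNReal.ofReal (Real.exp ε) * ν S + ENNReal.ofReal δ ∧
      ν S ≤ ENNReal.ofReal (Real.exp ε) * μ S + ENNReal.ofReal δ) :
    ∀ εs : ℝ, ε < εs →
      μ ({y | f y > ENNReal.ofReal (Real.exp εs) * g y} ∪
          {y | f y < ENNReal.ofReal (Real.exp (-εs)) * g y}) ≤
        ENNReal.ofReal (δ * (1 + Real.exp (-εs)) / (1 - Real.exp (ε - εs))) := by
  intro εs hεs
  set A : Set Ω := {y | f y > ENNReal.ofReal (Real.exp εs) * g y} with hAdef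
  set B : Set Ω := {y | f y < ENNReal.ofReal (Real.exp (-εs)) * g y} with hBdef
  have hA : MeasurableSet A := measurableSet_lt (hg.const_mul _) hf
  have hB : MeasurableSet B := measurableSet_lt hf (hg.const_mul _)
  set c : ℝ := Real.exp (ε - εs) with hcdef
  have hc0 : 0 ≤ c := (Real.exp_pos _).le
  have hc1 : c < 1 := Real.exp_lt_one_iff.mpr (by linarith)
  have hinv : ENNReal.ofReal (Real.exp (-εs)) * ENNReal.ofReal (Real.exp εs) = 1 := by
    rw [← ENNReal.ofReal_mul (Real.exp_pos _).le, ← Real.exp_add, neg_add_cancel,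
      Real.exp_zero, ENNReal.ofReal_one]
  have hcsplit : ENNReal.ofReal (Real.exp ε) * ENNReal.ofReal (Real.exp (-εs)) =
      ENNReal.ofReal c := by
    rw [← ENNReal.ofReal_mul (Real.exp_pos _).le, ← Real.exp_add]; rfl
  -- ν A ≤ e^{-εs} μ A
  have hνA : ν A ≤ ENNReal.ofReal (Real.exp (-εs)) * μ A := by
    have key : ENNReal.ofReal (Real.exp εs) * ν A ≤ μ A := by
      rw [hμ, hν, withDensity_apply f hA, withDensity_apply g hA,
        ← lintegral_const_mul _ hg]
      exact setLIntegral_mono hf (fun y hy => (le_of_lt hy))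
    calc ν A = ENNReal.ofReal (Real.exp (-εs)) * (ENNReal.ofReal (Real.exp εs) * ν A) := by
          rw [← mul_assoc, hinv, one_mul]
      _ ≤ _ := mul_le_mul_right key _
  -- μ B ≤ e^{-εs} ν B
  have hμB : μ B ≤ ENNReal.ofReal (Real.exp (-εs)) * ν B := by
    rw [hμ, hν, withDensity_apply f hB, withDensity_apply g hB, ← lintegral_const_mul _ hg]
    exact setLIntegral_mono ((hg.const_mul _)) (fun y hy => (le_of_lt hy))
  have hμAne : μ A ≠ ⊤ := measure_ne_top μ A
  have hνBne : ν B ≠ ⊤ := measure_ne_top ν B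
  have hboundA : μ A ≤ ENNReal.ofReal (δ / (1 - c)) := by
    apply aux_cancel hμAne hc0 hc1 hδ
    calc μ A ≤ ENNReal.ofReal (Real.exp ε) * ν A + ENNReal.ofReal δ := (hDP A hA).1
      _ ≤ ENNReal.ofReal (Real.exp ε) * (ENNReal.ofReal (Real.exp (-εs)) * μ A) +
          ENNReal.ofReal δ := by gcongr
      _ = ENNReal.ofReal c * μ A + ENNReal.ofReal δ := by rw [← mul_assoc, hcsplit]
  have hboundB : ν B ≤ ENNReal.ofReal (δ / (1 - c)) := by
    apply aux_cancel hνBne hc0 hc1 hδ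
    calc ν B ≤ ENNReal.ofReal (Real.exp ε) * μ B + ENNReal.ofReal δ := (hDP B hB).2
      _ ≤ ENNReal.ofReal (Real.exp ε) * (ENNReal.ofReal (Real.exp (-εs)) * ν B) +
          ENNReal.ofReal δ := by gcongr
      _ = ENNReal.ofReal c * ν B + ENNReal.ofReal δ := by rw [← mul_assoc, hcsplit]
  have hμBbound : μ B ≤ ENNReal.ofReal (Real.exp (-εs) * (δ / (1 - c))) := by
    calc μ B ≤ ENNReal.ofReal (Real.exp (-εs)) * ν B := hμB
      _ ≤ ENNReal.ofReal (Real.exp (-εs)) * ENNReal.ofReal (δ / (1 - c)) := by gcongr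
      _ = _ := by rw [← ENNReal.ofReal_mul (Real.exp_pos _).le]
  calc μ (A ∪ B) ≤ μ A + μ B := measure_union_le A B
    _ ≤ ENNReal.ofReal (δ / (1 - c)) + ENNReal.ofReal (Real.exp (-εs) * (δ / (1 - c))) :=
        add_le_add hboundA hμBbound
    _ = ENNReal.ofReal (δ * (1 + Real.exp (-εs)) / (1 - c)) := by
        have hdc : 0 ≤ δ / (1 - c) := div_nonneg hδ (by linarith)
        rw [← ENNReal.ofReal_add hdc (mul_nonneg (Real.exp_pos _).le hdc)]
        congr 1
        ring
end
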